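/- Let d be a positive integer and let G be a countable graph with all vertex degrees at most d. If G is uniformly amenable, then G is uniformly Følner. -/

import Mathlib

open scoped ENNReal
open MeasureTheory

namespace AFPaper

variable {V : Type*} {W : Type*}

/-- The ball of radius `r` around `x` in the graph `G`. -/
def gball (G : SimpleGraph V) (x : V) (r : ℕ) : Set V :=
  {y | G.Reachable x y ∧ G.dist x y ≤ r}

/-- All vertex degrees of `G` are at most `d`. -/
def DegLE (G : SimpleGraph V) (d : ℕ) : Prop :=
  ∀ v : V, (G.neighborSet v).Finite ∧ (G.neighborSet v).ncard ≤ d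

/-- The boundary of `F` inside the induced subgraph on the ambient set `L`:
vertices of `F` adjacent (in `G`) to some vertex of `L` outside `F`. -/
def boundaryIn (G : SimpleGraph V) (L F : Set V) : Set V :=
  {x ∈ F | ∃ y ∈ L \ F, G.Adj x y}

/-- The boundary of `F` in `G`. -/
def boundary (G : SimpleGraph V) (F : Set V) : Set V :=
  boundaryIn G Set.univ F

/-- `F` is an `ε`-Følner set with respect to the induced subgraph on `L`. -/
def IsFolnerIn (G : SimpleGraph V) (L : Set V) (ε : ℝ) (F : Set V) : Prop :=
  F.Finite ∧ ((boundaryIn G L F).ncard : ℝ) < ε * (F.ncard : ℝ)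

/-- `F` is an `ε`-Følner set in `G`. -/
def IsFolner (G : SimpleGraph V) (ε : ℝ) (F : Set V) : Prop :=
  IsFolnerIn G Set.univ ε F

/-- The set `F` has diameter at most `r` in `G`. -/
def DiamLE (G : SimpleGraph V) (r : ℕ) (F : Set V) : Prop :=
  ∀ x ∈ F, ∀ y ∈ F, G.Reachable x y ∧ G.dist x y ≤ r

/-- The connected component of `x` in the subgraph of `G` induced on `S`. -/
def componentIn (G : SimpleGraph V) (S : Set V) (x : V) : Set V :=
  {y | ∃ (hx : x ∈ S) (hy : y ∈ S), (G.induce S).Reachable ⟨x, hx⟩ ⟨y, hy⟩}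

/-- All connected components of the subgraph induced on `S` have size at most `k`. -/
def SmallComponents (G : SimpleGraph V) (S : Set V) (k : ℕ) : Prop :=
  ∀ x ∈ S, (componentIn G S x).Finite ∧ (componentIn G S x).ncard ≤ k

/-- A witness for Property A with accuracy `ε` and radius `r`. -/
def PropertyAWith (G : SimpleGraph V) (ε : ℝ) (r : ℕ) : Prop :=
  ∃ Θ : V → V → ℝ,
    (∀ x, (Function.support (Θ x)).Finite) ∧
    (∀ x y, 0 ≤ Θ x y) ∧
    (∀ x, (∑ᶠ y, Θ x y) = 1) ∧
    (∀ x y, Θ x y ≠ 0 → y ∈ gball G x r) ∧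
    (∀ x y, G.Adj x y → (∑ᶠ z, |Θ x z - Θ y z|) < ε)

/-- Property A for graphs. -/
def PropertyA (G : SimpleGraph V) : Prop :=
  ∀ ε : ℝ, 0 < ε → ∃ r : ℕ, 1 ≤ r ∧ PropertyAWith G ε r

/-- Uniform local amenability. -/
def UniformlyLocallyAmenable (G : SimpleGraph V) : Prop :=
  ∀ ε : ℝ, 0 < ε → ∃ k : ℕ, 0 < k ∧
    ∀ L : Set V, L.Finite → L.Nonempty →
      ∃ M : Set V, M ⊆ L ∧ M.Nonempty ∧ M.ncard ≤ k ∧ IsFolnerIn G L ε M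

/-- Local hyperfiniteness. -/
def LocallyHyperfinite (G : SimpleGraph V) : Prop :=
  ∀ ε : ℝ, 0 < ε → ∃ k : ℕ, 0 < k ∧
    ∀ L : Set V, L.Finite → L.Nonempty →
      ∃ L' : Set V, L' ⊆ L ∧ ((L'.ncard : ℝ) < ε * (L.ncard : ℝ)) ∧
        SmallComponents G (L \ L') k

/-- Weighted hyperfiniteness. -/
def WeightedHyperfinite (G : SimpleGraph V) : Prop :=
  ∀ ε : ℝ, 0 < ε → ∃ k : ℕ, 0 < k ∧
    ∀ w : V → ℝ, (Function.support w).Finite → (∀ x, 0 ≤ w x) →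
      ∃ L : Set V, (∑ᶠ x ∈ L, w x) ≤ ε * (∑ᶠ x, w x) ∧ SmallComponents G Lᶜ k

/-- `Y` is a `k`-separator: deleting `Y` leaves components of size at most `k`. -/
def IsSeparator (G : SimpleGraph V) (k : ℕ) (Y : Set V) : Prop :=
  SmallComponents G Yᶜ k

/-- The space of `k`-separators, as a subspace of `V → Bool` (product of discrete
spaces); its Borel σ-algebra coincides with the induced product σ-algebra used here. -/
abbrev SepSpace (G : SimpleGraph V) (k : ℕ) :=
  {f : V → Bool // IsSeparator G k {x | f x = true}}

/-- Strong hyperfiniteness. -/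
def StronglyHyperfinite (G : SimpleGraph V) : Prop :=
  ∀ ε : ℝ, 0 < ε → ∃ k : ℕ, 0 < k ∧
    ∃ μ : Measure (SepSpace G k), μ Set.univ = 1 ∧
      ∀ x : V, μ {Y : SepSpace G k | Y.1 x = true} < ENNReal.ofReal ε

/-- An `(ε,r)`-Følner packing, encoded as a partial equivalence relation
`p : V → V → Bool` ("being in the same member of the packing"); the classes are the
members of the packing, and `p x x = false` exactly when `x` is not covered. -/
structure IsPacking (G : SimpleGraph V) (ε : ℝ) (r : ℕ) (p : V → V → Bool) : Prop where
  symm : ∀ x y, p x y = true → p y x = true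
  trans : ∀ x y z, p x y = true → p y z = true → p x z = true
  folner : ∀ x, p x x = true → IsFolner G ε {y | p x y = true}
  diam : ∀ x, p x x = true → DiamLE G r {y | p x y = true}

/-- The space of `(ε,r)`-packings of `G`, as a subspace of `V → V → Bool`. -/
abbrev PackingSpace (G : SimpleGraph V) (ε : ℝ) (r : ℕ) :=
  {p : V → V → Bool // IsPacking G ε r p}

/-- Strong Følner hyperfiniteness. -/
def StronglyFolnerHyperfinite (G : SimpleGraph V) : Prop :=
  ∀ ε : ℝ, 0 < ε → ∃ r : ℕ, 1 ≤ r ∧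
    ∃ ν : Measure (PackingSpace G ε r), ν Set.univ = 1 ∧
      ∀ x : V, ENNReal.ofReal (1 - ε) < ν {P : PackingSpace G ε r | P.1 x x = true}

/-- A packing is a tiling when it covers every vertex. -/
def IsTiling (p : V → V → Bool) : Prop := ∀ x, p x x = true

/-- Strong almost finiteness. -/
def StronglyAlmostFinite (G : SimpleGraph V) : Prop :=
  ∀ ε : ℝ, 0 < ε → ∃ r : ℕ, 1 ≤ r ∧
    ∃ ν : Measure (PackingSpace G ε r), ν Set.univ = 1 ∧
      ν {P : PackingSpace G ε r | IsTiling P.1} = 1 ∧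
      ∀ x : V, ν {P : PackingSpace G ε r | x ∈ boundary G {y | P.1 x y = true}} <
        ENNReal.ofReal ε

/-- Almost finiteness: `V(G)` can be tiled by `ε`-Følner sets of diameter at most `r`. -/
def AlmostFinite (G : SimpleGraph V) : Prop :=
  ∀ ε : ℝ, 0 < ε → ∃ r : ℕ, ∃ T : Set (Set V),
    (∀ F ∈ T, IsFolner G ε F ∧ DiamLE G r F) ∧
    T.PairwiseDisjoint id ∧ ⋃₀ T = Set.univ

/-- Uniform amenability. -/
def UniformlyAmenable (G : SimpleGraph V) : Prop :=
  ∀ ε : ℝ, 0 < ε → ∃ r : ℕ, ∀ x : V, ∃ F : Set V, F ⊆ gball G x r ∧ IsFolner G ε F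

/-- The `r`-neighborhood of a set `L`. -/
def setBall (G : SimpleGraph V) (L : Set V) (r : ℕ) : Set V :=
  ⋃ x ∈ L, gball G x r

/-- The uniform Følner property. -/
def UniformlyFolner (G : SimpleGraph V) : Prop :=
  ∀ ε : ℝ, 0 < ε → ∃ r : ℕ, 1 < r ∧
    ∀ L : Set V, L.Finite → L.Nonempty →
      ∃ H : Set V, L ⊆ H ∧ H ⊆ setBall G L r ∧ IsFolner G ε H

/-- The Følner sum `Σ_x Σ_{y ∼ x} |f(x) − f(y)|`. -/
noncomputable def FolnerSum (G : SimpleGraph V) (f : V → ℝ) : ℝ :=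
  ∑ᶠ x, ∑ᶠ y ∈ G.neighborSet x, |f x - f y|

/-- `f` is an `ε`-Følner function. -/
def IsFolnerFun (G : SimpleGraph V) (ε : ℝ) (f : V → ℝ) : Prop :=
  (Function.support f).Finite ∧ (∀ x, 0 ≤ f x) ∧ f ≠ 0 ∧
    FolnerSum G f < ε * (∑ᶠ x, f x)

/-- `f` is an `ε`-Følner probability measure. -/
def IsFolnerProb (G : SimpleGraph V) (ε : ℝ) (f : V → ℝ) : Prop :=
  IsFolnerFun G ε f ∧ (∑ᶠ x, f x) = 1

/-- Følner Property A. -/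
def FolnerPropertyA (G : SimpleGraph V) : Prop :=
  ∀ ε : ℝ, 0 < ε → ∃ r : ℕ, 1 ≤ r ∧
    ∃ Θ : V → V → ℝ,
      (∀ x, IsFolnerProb G ε (Θ x)) ∧
      (∀ x y, Θ x y ≠ 0 → y ∈ gball G x r) ∧
      (∀ x y, G.Adj x y → (∑ᶠ z, |Θ x z - Θ y z|) < ε)

/-- The collection of `ε`-Følner sets of diameter at most `r`. -/
def FolnerSets (G : SimpleGraph V) (ε : ℝ) (r : ℕ) : Set (Set V) :=
  {H | IsFolner G ε H ∧ DiamLE G r H}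

/-- Fractional almost finiteness. -/
def FractionallyAlmostFinite (G : SimpleGraph V) : Prop :=
  ∀ ε : ℝ, 0 < ε → ∃ r : ℕ, 1 ≤ r ∧
    ∃ F : Set V → ℝ,
      (∀ H ∈ FolnerSets G ε r, 0 ≤ F H) ∧
      (∀ x : V, ∃ c : ℝ, 0 ≤ c ∧ c < ε ∧
        (∑ᶠ H ∈ {H ∈ FolnerSets G ε r | x ∈ H}, F H) = 1 - c) ∧
      (∀ x : V, (∑ᶠ H ∈ {H ∈ FolnerSets G ε r | x ∈ boundary G H}, F H) < ε)

/-- Subexponential growth: `lim_{r→∞} sup_x log|B_r(x)|/r = 0`. -/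
def SubexpGrowth (G : SimpleGraph V) : Prop :=
  ∀ ε : ℝ, 0 < ε → ∃ R : ℕ, ∀ r : ℕ, R ≤ r → ∀ x : V,
    Real.log ((gball G x r).ncard : ℝ) < ε * (r : ℝ)

/-- The rooted `r`-ball of `G` at `v` is rooted-isomorphic to the rooted `r`-ball of
`H` at `w`. -/
def BallIso (G : SimpleGraph V) (v : V) (H : SimpleGraph W) (w : W) (r : ℕ) : Prop :=
  ∃ (hv : v ∈ gball G v r) (hw : w ∈ gball H w r)
    (φ : ↥(gball G v r) ≃ ↥(gball H w r)),
      φ ⟨v, hv⟩ = ⟨w, hw⟩ ∧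
      ∀ a b : ↥(gball G v r), G.Adj ↑a ↑b ↔ H.Adj ↑(φ a) ↑(φ b)

/-- Neighborhood equivalence of graphs. -/
def NeighborhoodEquiv (G : SimpleGraph V) (H : SimpleGraph W) : Prop :=
  (∀ (r : ℕ) (v : V), ∃ w : W, BallIso G v H w r) ∧
  (∀ (r : ℕ) (w : W), ∃ v : V, BallIso H w G v r)

end AFPaper

/-!
Let `F x ⊆ B_r(x)` be `ε/2`-Følner sets and let `L` be finite. If at some step `j < t` the
neighbourhoods `B_j(L)` grow by a factor less than `1 + ε/(d+1)`, then `B_j(L)` is itself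
`ε`-Følner, since its boundary has at most `d |B_{j+1}(L) \ B_j(L)|` vertices. Otherwise
`|B_t(L)| ≥ (1 + ε/(d+1))^t |L|`. A maximal `2r`-separated set `W ⊆ B_t(L)` then has at least
`|B_t(L)| / (d+1)^{2r}` points, so for `t` large `|L| ≤ (ε/2) |W|`. The sets `F w`, `w ∈ W`,
are disjoint, so `⋃ F w` is an `ε/2`-Følner set with at least `|W|` vertices, and adding `L` to
it adds at most `|L|` boundary vertices.
-/

namespace AFPaper

section

variable {V : Type*} {G : SimpleGraph V} {d : ℕ}

lemma mem_gball_self (x : V) (r : ℕ) : x ∈ gball G x r :=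
  ⟨.refl x, by simp⟩

lemma mem_gball_comm {x y : V} {r : ℕ} : y ∈ gball G x r ↔ x ∈ gball G y r := by
  simp only [gball, Set.mem_ofPred_eq, SimpleGraph.dist_comm, SimpleGraph.reachable_comm]

lemma gball_mono (x : V) {r s : ℕ} (h : r ≤ s) : gball G x r ⊆ gball G x s :=
  fun _ hy => ⟨hy.1, hy.2.trans h⟩

lemma mem_gball_trans {x y z : V} {r s : ℕ} (hy : y ∈ gball G x r) (hz : z ∈ gball G y s) :
    z ∈ gball G x (r + s) :=
  ⟨hy.1.trans hz.1, (hy.1.dist_triangle_left z).trans (add_le_add hy.2 hz.2)⟩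

lemma disjoint_gball_of_notMem_gball {x y : V} {r s : ℕ} (h : y ∉ gball G x (r + s)) :
    Disjoint (gball G x r) (gball G y s) :=
  Set.disjoint_left.2 fun _ hx hy => h (mem_gball_trans hx (mem_gball_comm.1 hy))

@[simp]
lemma gball_zero (x : V) : gball G x 0 = {x} := by
  ext y
  constructor
  · rintro ⟨hxy, h0⟩
    exact ((hxy.dist_eq_zero_iff).1 (Nat.le_zero.1 h0)).symm
  · rintro rfl
    exact mem_gball_self y 0

lemma gball_succ_subset (x : V) (m : ℕ) :
    gball G x (m + 1) ⊆ gball G x m ∪ ⋃ u ∈ gball G x m, G.neighborSet u := by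
  rintro y ⟨hxy, hdist⟩
  obtain ⟨p, hp⟩ := hxy.symm.exists_walk_length_eq_dist
  cases p with
  | nil => exact Or.inl (mem_gball_self _ m)
  | @cons _ u _ hyu q =>
    have hq : q.length ≤ m := by
      rw [SimpleGraph.dist_comm] at hdist
      simp only [SimpleGraph.Walk.length_cons] at hp
      omega
    refine Or.inr (Set.mem_biUnion (x := u) ⟨⟨q.reverse⟩, ?_⟩ hyu.symm)
    exact (SimpleGraph.dist_le q.reverse).trans (by simpa using hq)

lemma ncard_biUnion_neighborSet_le (hdeg : DegLE G d) {A : Set V} (hA : A.Finite) :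
    (⋃ u ∈ A, G.neighborSet u).ncard ≤ A.ncard * d := by
  lift A to Finset V using hA
  rw [Set.ncard_coe_finset]
  simp only [Finset.mem_coe]
  exact (A.set_ncard_biUnion_le _).trans (A.sum_le_card_nsmul _ _ fun u _ => (hdeg u).2)

lemma gball_finite (hdeg : DegLE G d) (x : V) (m : ℕ) : (gball G x m).Finite := by
  induction m with
  | zero => simp
  | succ m ih =>
    exact (ih.union (ih.biUnion fun u _ => (hdeg u).1)).subset (gball_succ_subset x m)

lemma ncard_gball_le (hdeg : DegLE G d) (x : V) (m : ℕ) :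
    (gball G x m).ncard ≤ (d + 1) ^ m := by
  induction m with
  | zero => simp
  | succ m ih =>
    have hfin := gball_finite hdeg x m
    calc (gball G x (m + 1)).ncard
        ≤ (gball G x m ∪ ⋃ u ∈ gball G x m, G.neighborSet u).ncard :=
          Set.ncard_le_ncard (gball_succ_subset x m)
            (hfin.union (hfin.biUnion fun u _ => (hdeg u).1))
      _ ≤ (gball G x m).ncard + (gball G x m).ncard * d :=
          (Set.ncard_union_le _ _).trans
            (add_le_add_right (ncard_biUnion_neighborSet_le hdeg hfin) _)
      _ ≤ (d + 1) ^ (m + 1) := by rw [pow_succ]; nlinarith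

lemma subset_setBall (L : Set V) (r : ℕ) : L ⊆ setBall G L r :=
  fun x hx => Set.mem_biUnion hx (mem_gball_self x r)

lemma setBall_mono_left {L L' : Set V} (h : L ⊆ L') (r : ℕ) :
    setBall G L r ⊆ setBall G L' r :=
  Set.biUnion_subset_biUnion_left h

lemma setBall_mono_right (L : Set V) {r s : ℕ} (h : r ≤ s) : setBall G L r ⊆ setBall G L s :=
  Set.biUnion_mono subset_rfl fun x _ => gball_mono x h

@[simp]
lemma setBall_zero (L : Set V) : setBall G L 0 = L := by
  simp [setBall]

lemma setBall_setBall_subset (L : Set V) (r s : ℕ) :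
    setBall G (setBall G L r) s ⊆ setBall G L (r + s) := by
  simp only [setBall, Set.iUnion_subset_iff, Set.mem_iUnion]
  rintro y ⟨x, hx, hy⟩ z hz
  exact Set.mem_biUnion hx (mem_gball_trans hy hz)

lemma neighborSet_subset_setBall_succ {L : Set V} {r : ℕ} {x : V} (hx : x ∈ setBall G L r) :
    G.neighborSet x ⊆ setBall G L (r + 1) := fun _ hxy =>
  setBall_setBall_subset L r 1 <|
    Set.mem_biUnion hx ⟨hxy.reachable, (SimpleGraph.dist_eq_one_iff_adj.2 hxy).le⟩

lemma setBall_finite (hdeg : DegLE G d) {L : Set V} (hL : L.Finite) (r : ℕ) :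
    (setBall G L r).Finite :=
  hL.biUnion fun x _ => gball_finite hdeg x r

lemma ncard_setBall_le (hdeg : DegLE G d) {L : Set V} (hL : L.Finite) (r : ℕ) :
    (setBall G L r).ncard ≤ L.ncard * (d + 1) ^ r := by
  lift L to Finset V using hL
  rw [Set.ncard_coe_finset, setBall]
  simp only [Finset.mem_coe]
  exact (L.set_ncard_biUnion_le _).trans
    (L.sum_le_card_nsmul _ _ fun x _ => ncard_gball_le hdeg x r)

lemma exists_separated_net {S : Set V} (hS : S.Finite) (r : ℕ) :
    ∃ W : Finset V, ↑W ⊆ S ∧ (W : Set V).Pairwise (fun a b => b ∉ gball G a r) ∧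
      S ⊆ setBall G W r := by
  classical
  induction S, hS using Set.Finite.induction_on with
  | empty => exact ⟨∅, by simp⟩
  | @insert a S _ _ ih =>
    obtain ⟨W, hWS, hWsep, hSW⟩ := ih
    by_cases ha : a ∈ setBall G W r
    · exact ⟨W, hWS.trans (Set.subset_insert a S), hWsep, Set.insert_subset ha hSW⟩
    · refine ⟨insert a W, ?_, ?_, ?_⟩
      · simpa using Set.insert_subset_insert hWS
      · have hfar : ∀ w ∈ W, a ∉ gball G w r := fun w hw haw =>
          ha (Set.mem_biUnion (Finset.mem_coe.2 hw) haw)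
        rw [Finset.coe_insert, Set.pairwise_insert]
        exact ⟨hWsep, fun w hw _ => ⟨mem_gball_comm.not.1 (hfar w hw), hfar w hw⟩⟩
      · rw [Finset.coe_insert]
        exact Set.insert_subset (subset_setBall _ r (Set.mem_insert a _))
          (hSW.trans (setBall_mono_left (Set.subset_insert a _) r))

lemma boundary_subset (F : Set V) : boundary G F ⊆ F :=
  fun _ hx => hx.1

lemma boundary_union_subset (A B : Set V) :
    boundary G (A ∪ B) ⊆ boundary G A ∪ boundary G B := by
  rintro x ⟨hx | hx, y, ⟨-, hy⟩, hxy⟩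
  · exact Or.inl ⟨hx, y, ⟨trivial, fun h => hy (Or.inl h)⟩, hxy⟩
  · exact Or.inr ⟨hx, y, ⟨trivial, fun h => hy (Or.inr h)⟩, hxy⟩

lemma boundary_biUnion_subset {ι : Type*} (W : Set ι) (F : ι → Set V) :
    boundary G (⋃ i ∈ W, F i) ⊆ ⋃ i ∈ W, boundary G (F i) := by
  rintro x ⟨hx, y, ⟨-, hy⟩, hxy⟩
  obtain ⟨i, hi, hxi⟩ := Set.mem_iUnion₂.1 hx
  exact Set.mem_biUnion hi ⟨hxi, y, ⟨trivial, fun h => hy (Set.mem_biUnion hi h)⟩, hxy⟩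

lemma ncard_boundary_le (hdeg : DegLE G d) {S T : Set V} (hT : T.Finite)
    (hST : ∀ x ∈ S, G.neighborSet x ⊆ T) :
    (boundary G S).ncard ≤ (T \ S).ncard * d := by
  have hsub : boundary G S ⊆ ⋃ u ∈ T \ S, G.neighborSet u := by
    rintro x ⟨hx, y, ⟨-, hy⟩, hxy⟩
    exact Set.mem_biUnion ⟨hST x hx hxy, hy⟩ hxy.symm
  exact (Set.ncard_le_ncard hsub (hT.sdiff.biUnion fun u _ => (hdeg u).1)).trans
    (ncard_biUnion_neighborSet_le hdeg hT.sdiff)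

lemma IsFolner.ncard_pos {ε : ℝ} {F : Set V} (h : IsFolner G ε F) : 0 < F.ncard := by
  have h2 := h.2
  contrapose! h2
  simp [Nat.le_zero.1 h2]

lemma ncard_biUnion_finset {ι : Type*} {W : Finset ι} {F : ι → Set V}
    (hfin : ∀ i ∈ W, (F i).Finite) (hdisj : (W : Set ι).PairwiseDisjoint F) :
    (⋃ i ∈ W, F i).ncard = ∑ i ∈ W, (F i).ncard := by
  simpa only [Finset.set_biUnion_coe, finsum_mem_coe_finset] using
    W.finite_toSet.ncard_biUnion hfin hdisj

lemma IsFolner.biUnion {ι : Type*} {ε : ℝ} {W : Finset ι} (hW : W.Nonempty) {F : ι → Set V}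
    (hF : ∀ i ∈ W, IsFolner G ε (F i)) (hdisj : (W : Set ι).PairwiseDisjoint F) :
    IsFolner G ε (⋃ i ∈ W, F i) := by
  have hfin : ∀ i ∈ W, (F i).Finite := fun i hi => (hF i hi).1
  refine ⟨W.finite_toSet.biUnion hfin, ?_⟩
  have hbd : (boundary G (⋃ i ∈ W, F i)).ncard ≤ ∑ i ∈ W, (boundary G (F i)).ncard := by
    refine (Set.ncard_le_ncard (boundary_biUnion_subset (W : Set ι) F) ?_).trans
      (W.set_ncard_biUnion_le _)
    exact W.finite_toSet.biUnion fun i hi => (hfin i hi).subset (boundary_subset _)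
  calc ((boundary G (⋃ i ∈ W, F i)).ncard : ℝ)
      ≤ ∑ i ∈ W, ((boundary G (F i)).ncard : ℝ) := by exact_mod_cast hbd
    _ < ∑ i ∈ W, ε * (F i).ncard := Finset.sum_lt_sum_of_nonempty hW fun i hi => (hF i hi).2
    _ = ε * (⋃ i ∈ W, F i).ncard := by
      rw [← Finset.mul_sum, ncard_biUnion_finset hfin hdisj, Nat.cast_sum]

lemma IsFolner.card_le_ncard_biUnion {ι : Type*} {ε : ℝ} {W : Finset ι} {F : ι → Set V}
    (hF : ∀ i ∈ W, IsFolner G ε (F i)) (hdisj : (W : Set ι).PairwiseDisjoint F) :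
    W.card ≤ (⋃ i ∈ W, F i).ncard := by
  rw [ncard_biUnion_finset (fun i hi => (hF i hi).1) hdisj]
  exact W.card_eq_sum_ones.le.trans (Finset.sum_le_sum fun i hi => (hF i hi).ncard_pos)

lemma IsFolner.union {ε ε' : ℝ} {A U : Set V} (hU : IsFolner G ε U) (hA : A.Finite)
    (hAU : (A.ncard : ℝ) ≤ ε' * U.ncard) : IsFolner G (ε' + ε) (A ∪ U) := by
  have hUpos : (0 : ℝ) < U.ncard := by exact_mod_cast hU.ncard_pos
  have hε : 0 < ε := pos_of_mul_pos_left ((Nat.cast_nonneg _).trans_lt hU.2) hUpos.le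
  have hε' : 0 ≤ ε' := nonneg_of_mul_nonneg_left ((Nat.cast_nonneg _).trans hAU) hUpos
  have hfin : (A ∪ U).Finite := hA.union hU.1
  have hbd : (boundary G (A ∪ U)).ncard ≤ A.ncard + (boundary G U).ncard :=
    (Set.ncard_le_ncard ((boundary_union_subset A U).trans
      (Set.union_subset_union_left _ (boundary_subset A))) (hA.union (hU.1.subset
        (boundary_subset U)))).trans (Set.ncard_union_le _ _)
  refine ⟨hfin, ?_⟩
  calc ((boundary G (A ∪ U)).ncard : ℝ)
      ≤ A.ncard + (boundary G U).ncard := by exact_mod_cast hbd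
    _ < ε' * U.ncard + ε * U.ncard := add_lt_add_of_le_of_lt hAU hU.2
    _ ≤ (ε' + ε) * (A ∪ U).ncard := by
      rw [← add_mul]
      exact mul_le_mul_of_nonneg_left
        (by exact_mod_cast Set.ncard_le_ncard Set.subset_union_right hfin) (by linarith)

lemma isFolner_setBall_of_ncard_lt (hdeg : DegLE G d) {L : Set V} (hL : L.Finite) {ε δ : ℝ}
    (hδ : (d + 1) * δ ≤ ε) {j : ℕ}
    (hj : ((setBall G L (j + 1)).ncard : ℝ) < (1 + δ) * (setBall G L j).ncard) :
    IsFolner G ε (setBall G L j) := by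
  have hfin := setBall_finite hdeg hL (j + 1)
  have hbd := ncard_boundary_le hdeg hfin fun _ hx => neighborSet_subset_setBall_succ (L := L) hx
  have hdiff : ((setBall G L (j + 1) \ setBall G L j).ncard : ℝ) =
      (setBall G L (j + 1)).ncard - (setBall G L j).ncard :=
    Set.cast_ncard_sdiff (setBall_mono_right L j.le_succ) hfin
  refine ⟨setBall_finite hdeg hL j, ?_⟩
  have hgap : 0 ≤ ((setBall G L (j + 1) \ setBall G L j).ncard : ℝ) := Nat.cast_nonneg _
  have hsize : 0 ≤ ((setBall G L j).ncard : ℝ) := Nat.cast_nonneg _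
  calc ((boundary G (setBall G L j)).ncard : ℝ)
      ≤ (setBall G L (j + 1) \ setBall G L j).ncard * d := by exact_mod_cast hbd
    _ ≤ (setBall G L (j + 1) \ setBall G L j).ncard * (d + 1) := by linarith
    _ < δ * (setBall G L j).ncard * (d + 1) := by
      rw [hdiff]
      exact mul_lt_mul_of_pos_right (by linarith) (by positivity)
    _ ≤ ε * (setBall G L j).ncard := by nlinarith

lemma exists_isFolner_of_ncard_mul_le (hdeg : DegLE G d) {ε ε' : ℝ} {r : ℕ} {F : V → Set V}
    (hFr : ∀ x, F x ⊆ gball G x r) (hF : ∀ x, IsFolner G ε (F x)) {L S : Set V}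
    (hL : L.Finite) (hS : S.Finite) (hSne : S.Nonempty)
    (hLS : (L.ncard : ℝ) * (d + 1) ^ (r + r) ≤ ε' * S.ncard) :
    ∃ H, L ⊆ H ∧ H ⊆ L ∪ setBall G S r ∧ IsFolner G (ε' + ε) H := by
  obtain ⟨W, hWS, hWsep, hSW⟩ := exists_separated_net (G := G) hS (r + r)
  have hWne : W.Nonempty := by
    obtain ⟨x, hx⟩ := hSne
    obtain ⟨w, hw, -⟩ := Set.mem_iUnion₂.1 (hSW hx)
    exact ⟨w, hw⟩
  have hdisj : (W : Set V).PairwiseDisjoint F := fun a ha b hb hab =>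
    (disjoint_gball_of_notMem_gball (hWsep ha hb hab)).mono (hFr a) (hFr b)
  have hScard : S.ncard ≤ W.card * (d + 1) ^ (r + r) := by
    simpa using (Set.ncard_le_ncard hSW (setBall_finite hdeg W.finite_toSet _)).trans
      (ncard_setBall_le hdeg W.finite_toSet (r + r))
  have hWU := IsFolner.card_le_ncard_biUnion (fun w _ => hF w) hdisj
  have hLU : (L.ncard : ℝ) ≤ ε' * (⋃ w ∈ W, F w).ncard := by
    have hSpos : (0 : ℝ) < S.ncard := by exact_mod_cast (Set.ncard_pos hS).2 hSne
    have hε' : 0 ≤ ε' := nonneg_of_mul_nonneg_left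
      ((by positivity : (0 : ℝ) ≤ L.ncard * (d + 1) ^ (r + r)).trans hLS) hSpos
    refine le_of_mul_le_mul_right (hLS.trans ?_) (by positivity : (0 : ℝ) < (d + 1) ^ (r + r))
    rw [mul_assoc]
    gcongr
    exact_mod_cast hScard.trans (Nat.mul_le_mul_right _ hWU)
  refine ⟨L ∪ ⋃ w ∈ W, F w, Set.subset_union_left, Set.union_subset_union_right L ?_,
    (IsFolner.biUnion hWne (fun w _ => hF w) hdisj).union hL hLU⟩
  exact Set.iUnion₂_subset fun w hw =>
    (hFr w).trans (Set.subset_biUnion_of_mem (u := fun x => gball G x r) (hWS hw))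

end

theorem uniformlyAmenable_implies_uniformlyFolner_general
    (d : ℕ) {V : Type}
    (G : SimpleGraph V) (hdeg : DegLE G d)
    (hUA : UniformlyAmenable G) :
    UniformlyFolner G := by
  intro ε hε
  obtain ⟨r, hr⟩ := hUA (ε / 2) (half_pos hε)
  choose F hFr hF using hr
  set δ : ℝ := ε / (d + 1)
  have hδ : (d + 1) * δ = ε := mul_div_cancel₀ ε (by positivity)
  obtain ⟨t, ht⟩ := pow_unbounded_of_one_lt (2 * (d + 1) ^ (r + r) / ε)
    (lt_add_of_pos_right 1 (by positivity : 0 < δ))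
  refine ⟨t + r + 2, by omega, fun L hL hLne => ?_⟩
  by_cases hslow : ∃ j < t, ((setBall G L (j + 1)).ncard : ℝ) < (1 + δ) * (setBall G L j).ncard
  · obtain ⟨j, hjt, hj⟩ := hslow
    exact ⟨setBall G L j, subset_setBall L j, setBall_mono_right L (by omega),
      isFolner_setBall_of_ncard_lt hdeg hL hδ.le hj⟩
  push Not at hslow
  have hgrowth : (1 + δ) ^ t * L.ncard ≤ (setBall G L t).ncard := by
    simpa using geom_le (u := fun j => ((setBall G L j).ncard : ℝ)) (by positivity) t hslow
  have hLS : (L.ncard : ℝ) * (d + 1) ^ (r + r) ≤ ε / 2 * (setBall G L t).ncard := by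
    have hD : ((d : ℝ) + 1) ^ (r + r) ≤ ε / 2 * (1 + δ) ^ t := by
      linarith [(div_lt_iff₀ hε).1 ht]
    calc (L.ncard : ℝ) * (d + 1) ^ (r + r) ≤ L.ncard * (ε / 2 * (1 + δ) ^ t) := by gcongr
      _ = ε / 2 * ((1 + δ) ^ t * L.ncard) := by ring
      _ ≤ ε / 2 * (setBall G L t).ncard := by gcongr
  obtain ⟨H, hLH, hHS, hH⟩ := exists_isFolner_of_ncard_mul_le hdeg hFr hF hL
    (setBall_finite hdeg hL t) (hLne.mono (subset_setBall L t)) hLS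
  have hSL : setBall G (setBall G L t) r ⊆ setBall G L (t + r + 2) :=
    (setBall_setBall_subset L t r).trans (setBall_mono_right L (by omega))
  exact ⟨H, hLH, hHS.trans (Set.union_subset (subset_setBall L _) hSL),
    by rwa [add_halves] at hH⟩

/-- Uniformly amenable graphs are uniformly Følner. -/
theorem uniformlyAmenable_implies_uniformlyFolner
    (d : ℕ) (hd : 0 < d) {V : Type} [Countable V]
    (G : SimpleGraph V) (hdeg : DegLE G d)
    (hUA : UniformlyAmenable G) :
    UniformlyFolner G :=
  uniformlyAmenable_implies_uniformlyFolner_general d G hdeg hUA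

end AFPaper
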